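/- arXiv:1607.08794 — 2 statements merged into one kernel-verified Lean document; each statement's English description precedes it below -/
import Mathlib

section
/- Let $(\lambda_n)_{n\ge2}$ be positive reals with $\sum_{n\ge2}\lambda_n^{-2}<\infty$, and set $A_n=\sum_{i=n+1}^\infty \lambda_i^{-1}$ (assumed finite) and $B_n^2=\sum_{i=n+1}^\infty \lambda_i^{-2}$. Then $\lambda_n^{-1}=o(A_n)$ as $n\to\infty$ if and only if $B_n = o(A_n)$ as $n\to\infty$. -/
/-!
Write $a_n = \lambda_n^{-1}$. If $a_i \le c^2 A_i$ for all $i > n$, then $a_i \le c^2 A_n$ there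
because $A$ is antitone, so $B_n^2 = \sum_{i>n} a_i^2 \le c^2 A_n \sum_{i>n} a_i = c^2 A_n^2$.
Conversely $a_{n+1} \le B_n$, so $B = o(A)$ gives $a_{n+1} = o(A_n)$; since
$A_{n+1} = A_n - a_{n+1}$, this makes $A_n = O(A_{n+1})$ and hence $a_{n+1} = o(A_{n+1})$.
-/

open Filter Topology Asymptotics

noncomputable def tailSum (a : ℕ → ℝ) (n : ℕ) : ℝ := ∑' i, a (n + 1 + i)

section TailSum

variable {a : ℕ → ℝ}

lemma Summable.comp_succ_add (ha : Summable a) (n : ℕ) : Summable fun i => a (n + 1 + i) :=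
  ((summable_nat_add_iff (n + 1)).2 ha).congr fun i => by rw [add_comm]

lemma tailSum_nonneg (h0 : ∀ n, 0 ≤ a n) (n : ℕ) : 0 ≤ tailSum a n :=
  tsum_nonneg fun _ => h0 _

lemma tailSum_pos (ha : Summable a) (hpos : ∀ n, 0 < a n) (n : ℕ) : 0 < tailSum a n :=
  (ha.comp_succ_add n).tsum_pos (fun _ => (hpos _).le) 0 (hpos _)

lemma tailSum_eq_add_tailSum_succ (ha : Summable a) (n : ℕ) :
    tailSum a n = a (n + 1) + tailSum a (n + 1) := by
  rw [tailSum, (ha.comp_succ_add n).tsum_eq_zero_add, tailSum, add_zero]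
  congr 2 with i
  ring_nf

lemma tailSum_antitone (ha : Summable a) (h0 : ∀ n, 0 ≤ a n) : Antitone (tailSum a) :=
  antitone_nat_of_succ_le fun n => by
    rw [tailSum_eq_add_tailSum_succ ha n]
    linarith [h0 (n + 1)]

lemma le_tailSum (ha : Summable a) (h0 : ∀ n, 0 ≤ a n) (n : ℕ) : a (n + 1) ≤ tailSum a n :=
  (ha.comp_succ_add n).le_tsum 0 fun _ _ => h0 _

lemma tailSum_sq_le (ha : Summable a) (h0 : ∀ n, 0 ≤ a n) {n : ℕ} {c : ℝ}
    (hc : ∀ i, n < i → a i ≤ c) : tailSum (fun i => a i ^ 2) n ≤ c * tailSum a n := by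
  have hterm : ∀ i, a (n + 1 + i) ^ 2 ≤ c * a (n + 1 + i) := fun i => by
    rw [sq]
    exact mul_le_mul_of_nonneg_right (hc _ (by omega)) (h0 _)
  have hsum : Summable fun i => c * a (n + 1 + i) := (ha.comp_succ_add n).mul_left c
  calc tailSum (fun i => a i ^ 2) n
      ≤ ∑' i, c * a (n + 1 + i) :=
        (hsum.of_nonneg_of_le (fun _ => sq_nonneg _) hterm).tsum_le_tsum hterm hsum
    _ = c * tailSum a n := tsum_mul_left

lemma isLittleO_sqrt_tailSum_sq (ha : Summable a) (h0 : ∀ n, 0 ≤ a n)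
    (h : a =o[atTop] tailSum a) :
    (fun n => √(tailSum (fun i => a i ^ 2) n)) =o[atTop] tailSum a := by
  have hA0 := tailSum_nonneg h0
  refine isLittleO_iff.2 fun c hc => ?_
  obtain ⟨N, hN⟩ := eventually_atTop.1 (isLittleO_iff.1 h (pow_pos hc 2))
  refine eventually_atTop.2 ⟨N, fun n hn => ?_⟩
  have hsmall : ∀ i, n < i → a i ≤ c ^ 2 * tailSum a n := fun i hi => by
    have hi' := hN i (by omega)
    rw [Real.norm_of_nonneg (h0 i), Real.norm_of_nonneg (hA0 i)] at hi'
    exact hi'.trans (mul_le_mul_of_nonneg_left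
      (tailSum_antitone ha h0 (show n ≤ i by omega)) (sq_nonneg c))
  rw [Real.norm_of_nonneg (Real.sqrt_nonneg _), Real.norm_of_nonneg (hA0 n),
    Real.sqrt_le_iff]
  refine ⟨mul_nonneg hc.le (hA0 n), ?_⟩
  calc tailSum (fun i => a i ^ 2) n ≤ c ^ 2 * tailSum a n * tailSum a n :=
        tailSum_sq_le ha h0 hsmall
    _ = (c * tailSum a n) ^ 2 := by ring

lemma isLittleO_of_isLittleO_sqrt_tailSum_sq (ha : Summable a)
    (ha2 : Summable fun n => a n ^ 2) (h0 : ∀ n, 0 ≤ a n)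
    (h : (fun n => √(tailSum (fun i => a i ^ 2) n)) =o[atTop] tailSum a) :
    a =o[atTop] tailSum a := by
  have hle : ∀ n, a (n + 1) ≤ √(tailSum (fun i => a i ^ 2) n) := fun n =>
    Real.le_sqrt_of_sq_le (le_tailSum ha2 (fun _ => sq_nonneg _) n)
  have hsucc : (fun n => a (n + 1)) =o[atTop] tailSum a := by
    refine (isBigO_of_le atTop fun n => ?_).trans_isLittleO h
    rw [Real.norm_of_nonneg (h0 _), Real.norm_of_nonneg (Real.sqrt_nonneg _)]
    exact hle n
  have hshift : tailSum a =O[atTop] fun n => tailSum a (n + 1) := by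
    refine hsucc.right_isBigO_sub.congr_right fun n => ?_
    rw [tailSum_eq_add_tailSum_succ ha n]
    ring
  rw [← map_add_atTop_eq_nat 1, isLittleO_map]
  exact hsucc.trans_isBigO hshift

end TailSum

theorem little_o_equivalence (lam : ℕ → ℝ) (hpos : ∀ n, 0 < lam n)
    (hsum : Summable fun n => (lam n)⁻¹)
    (hsum2 : Summable fun n => ((lam n)⁻¹) ^ 2)
    (A : ℕ → ℝ) (hA : ∀ n, A n = ∑' i : ℕ, (lam (n + 1 + i))⁻¹)
    (B : ℕ → ℝ) (hB : ∀ n, B n = Real.sqrt (∑' i : ℕ, ((lam (n + 1 + i))⁻¹) ^ 2)) :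
    Tendsto (fun n => (lam n)⁻¹ / A n) atTop (𝓝 0) ↔
      Tendsto (fun n => B n / A n) atTop (𝓝 0) := by
  have hinv_pos : ∀ n, 0 < (lam n)⁻¹ := fun n => inv_pos.2 (hpos n)
  have hA' : A = tailSum fun n => (lam n)⁻¹ := funext hA
  have hB' : B = fun n => √(tailSum (fun i => ((lam i)⁻¹) ^ 2) n) := funext hB
  have hA_ne : ∀ n, A n ≠ 0 := fun n => by
    rw [hA']
    exact (tailSum_pos hsum hinv_pos n).ne'
  rw [← isLittleO_iff_tendsto fun n hn => absurd hn (hA_ne n),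
    ← isLittleO_iff_tendsto fun n hn => absurd hn (hA_ne n), hA', hB']
  exact ⟨isLittleO_sqrt_tailSum_sq hsum (fun n => (hinv_pos n).le),
    isLittleO_of_isLittleO_sqrt_tailSum_sq hsum hsum2 fun n => (hinv_pos n).le⟩
end

section
/- Let $(\lambda_n)_{n\ge2}$ be positive reals with $\sum_{n\ge2}\lambda_n^{-1}<\infty$, and let $X_2, X_3, \ldots$ be independent exponential random variables with $\mathbb{E}X_i = \lambda_i^{-1}$. Set $T_n = \sum_{i=n+1}^\infty X_i$ and $A_n = \mathbb{E}T_n = \sum_{i=n+1}^\infty \lambda_i^{-1}$. If $\lambda_n^{-1} = o(A_n)$ as $n\to\infty$, then $T_n / A_n \to 1$ in probability as $n \to \infty$. -/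
/-!
Write `f i = λ_i⁻¹`. The centred hitting time `T_n - A_n` is an a.s. convergent series of
independent centred terms, and Fatou's lemma carries the variance identity of its partial sums
over to the series: `E (T_n - A_n)² ≤ B_n² = ∑_{i>n} f i ²`. Chebyshev then bounds
`P(|T_n / A_n - 1| ≥ ε)` by `B_n² / (ε A_n)²`. The hypothesis gives `f i ≤ δ A_i` for all large
`i`; as the tails `A` decrease, `f i ≤ δ A_n` for `i > n`, hence `B_n² ≤ δ A_n ∑_{i>n} f i = δ A_n²`.
-/

open MeasureTheory ProbabilityTheory Filter Topology Real Set
open scoped ENNReal Nat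

theorem MeasureTheory.lintegral_le_of_tendsto_ae {α : Type*} [MeasurableSpace α] {μ : Measure α}
    {F : ℕ → α → ℝ≥0∞} {f : α → ℝ≥0∞} {C : ℝ≥0∞} (hF : ∀ k, AEMeasurable (F k) μ)
    (hlim : ∀ᵐ a ∂μ, Tendsto (fun k => F k a) atTop (𝓝 (f a))) (hC : ∀ k, ∫⁻ a, F k a ∂μ ≤ C) :
    ∫⁻ a, f a ∂μ ≤ C :=
  calc ∫⁻ a, f a ∂μ = ∫⁻ a, liminf (fun k => F k a) atTop ∂μ :=
        lintegral_congr_ae (hlim.mono fun _ ha => ha.liminf_eq.symm)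
    _ ≤ liminf (fun k => ∫⁻ a, F k a ∂μ) atTop := lintegral_liminf_le' hF
    _ ≤ C := liminf_le_of_frequently_le' (Frequently.of_forall hC)

theorem MeasureTheory.meas_ge_abs_sub_le_lintegral_sq_div {α : Type*} [MeasurableSpace α]
    {μ : Measure α} {f : α → ℝ} (hf : AEMeasurable f μ) (m : ℝ) {c : ℝ} (hc : 0 < c) :
    μ {a | c ≤ |f a - m|} ≤ (∫⁻ a, ENNReal.ofReal ((f a - m) ^ 2) ∂μ) / ENNReal.ofReal (c ^ 2) := by
  calc μ {a | c ≤ |f a - m|} ≤ μ {a | ENNReal.ofReal (c ^ 2) ≤ ENNReal.ofReal ((f a - m) ^ 2)} := by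
        refine measure_mono fun a (ha : c ≤ |f a - m|) => ENNReal.ofReal_le_ofReal ?_
        rw [← sq_abs (f a - m)]
        exact pow_le_pow_left₀ hc.le ha 2
    _ ≤ _ := meas_ge_le_lintegral_div (((hf.sub_const m).pow_const 2).ennreal_ofReal)
        (by simpa using hc.ne') ENNReal.ofReal_ne_top

namespace ProbabilityTheory

lemma ae_nonneg_expMeasure (r : ℝ) : ∀ᵐ x ∂expMeasure r, 0 ≤ x := by
  have hpdf : Measurable (gammaPDF 1 r) := (measurable_gammaPDFReal 1 r).ennreal_ofReal
  rw [expMeasure, gammaMeasure, ae_withDensity_iff hpdf]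
  exact ae_of_all _ fun x hx => not_lt.1 fun hneg => hx (gammaPDF_of_neg hneg)

lemma lintegral_ofReal_pow_expMeasure {r : ℝ} (hr : 0 < r) (k : ℕ) :
    ∫⁻ x, ENNReal.ofReal (x ^ k) ∂expMeasure r = ENNReal.ofReal (k ! / r ^ k) := by
  set g : ℝ → ℝ := fun x => r * (x ^ ((k + 1 : ℝ) - 1) * exp (-(r * x)))
  have hpdf : ∀ x, exponentialPDF r x * ENNReal.ofReal (x ^ k)
      = (Ici 0).indicator (fun x => ENNReal.ofReal (g x)) x := by
    intro x
    rcases lt_or_ge x 0 with hx | hx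
    · simp [exponentialPDF_of_neg hx, hx]
    · rw [exponentialPDF_of_nonneg hx, ← ENNReal.ofReal_mul (by positivity),
        indicator_of_mem (mem_Ici.2 hx)]
      simp only [g, add_sub_cancel_right, rpow_natCast]
      ring_nf
  -- the Gamma integral is nonzero, which forces integrability
  have hint : IntegrableOn g (Ici 0) := by
    rw [integrableOn_Ici_iff_integrableOn_Ioi]
    refine Integrable.of_integral_ne_zero ?_
    rw [integral_const_mul, integral_rpow_mul_exp_neg_mul_Ioi (by positivity) hr]
    have := Gamma_pos_of_pos (show (0 : ℝ) < k + 1 by positivity)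
    positivity
  calc ∫⁻ x, ENNReal.ofReal (x ^ k) ∂expMeasure r
      = ∫⁻ x in Ici 0, ENNReal.ofReal (g x) := by
        rw [← lintegral_indicator measurableSet_Ici, ← lintegral_congr hpdf]
        exact lintegral_withDensity_eq_lintegral_mul _
          (measurable_exponentialPDFReal r).ennreal_ofReal
          (measurable_id.pow_const k).ennreal_ofReal
    _ = ENNReal.ofReal (∫ x in Ioi 0, g x) := by
        rw [← integral_Ici_eq_integral_Ioi, ofReal_integral_eq_lintegral_ofReal hint]
        filter_upwards [self_mem_ae_restrict measurableSet_Ici] with x (hx : 0 ≤ x)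
        positivity
    _ = ENNReal.ofReal (k ! / r ^ k) := by
        rw [integral_const_mul, integral_rpow_mul_exp_neg_mul_Ioi (by positivity) hr,
          Gamma_nat_eq_factorial, ← Nat.cast_succ, rpow_natCast, one_div_pow, pow_succ]
        field_simp

lemma integral_pow_expMeasure {r : ℝ} (hr : 0 < r) (k : ℕ) :
    ∫ x, x ^ k ∂expMeasure r = k ! / r ^ k := by
  rw [integral_eq_lintegral_of_nonneg_ae ((ae_nonneg_expMeasure r).mono fun x hx => pow_nonneg hx k)
    (measurable_id.pow_const k).aestronglyMeasurable, lintegral_ofReal_pow_expMeasure hr,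
    ENNReal.toReal_ofReal (by positivity)]

lemma memLp_id_expMeasure {r : ℝ} (hr : 0 < r) : MemLp id 2 (expMeasure r) := by
  rw [memLp_two_iff_integrable_sq aestronglyMeasurable_id]
  simp only [id]
  refine ⟨(measurable_id.pow_const 2).aestronglyMeasurable, ?_⟩
  rw [hasFiniteIntegral_iff_ofReal (ae_of_all _ fun x => sq_nonneg x)]
  simp only [lintegral_ofReal_pow_expMeasure hr, ENNReal.ofReal_lt_top]

lemma integral_id_expMeasure {r : ℝ} (hr : 0 < r) : ∫ x, x ∂expMeasure r = r⁻¹ := by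
  simpa using integral_pow_expMeasure hr 1

lemma variance_id_expMeasure {r : ℝ} (hr : 0 < r) : Var[id; expMeasure r] = r⁻¹ ^ 2 := by
  have := isProbabilityMeasure_expMeasure hr
  rw [variance_eq_sub (memLp_id_expMeasure hr)]
  simp only [Pi.pow_apply, id, integral_pow_expMeasure hr 2, integral_id_expMeasure hr]
  norm_num
  ring

lemma HasLaw.memLp_iff {E : Type*} [NormedAddCommGroup E] [MeasurableSpace E]
    [OpensMeasurableSpace E] [SecondCountableTopology E] {Ω : Type*} [MeasurableSpace Ω]
    {P : Measure Ω} {X : Ω → E} {μ : Measure E} (hX : HasLaw X μ P) {p : ℝ≥0∞} :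
    MemLp X p P ↔ MemLp id p μ := by
  rw [← hX.map_eq]
  exact (memLp_map_measure_iff aestronglyMeasurable_id hX.aemeasurable).symm

section Series

variable {Ω : Type*} [MeasurableSpace Ω] {μ : Measure Ω} [IsFiniteMeasure μ]

theorem IndepFun.lintegral_sq_sum_sub_eq_ofReal_sum_variance {ι : Type*} {X : ι → Ω → ℝ}
    {s : Finset ι} (hX : ∀ i ∈ s, MemLp (X i) 2 μ)
    (hindep : Set.Pairwise ↑s fun i j => X i ⟂ᵢ[μ] X j) :
    ∫⁻ ω, ENNReal.ofReal ((∑ i ∈ s, X i ω - ∑ i ∈ s, μ[X i]) ^ 2) ∂μ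
      = ENNReal.ofReal (∑ i ∈ s, Var[X i; μ]) := by
  rw [← IndepFun.variance_sum hX hindep, (memLp_finsetSum' s hX).ofReal_variance_eq,
    evariance_eq_lintegral_ofReal]
  simp only [Finset.sum_apply]
  rw [integral_finsetSum s fun i hi => (hX i hi).integrable one_le_two]

theorem lintegral_sq_tsum_sub_le {X : ℕ → Ω → ℝ} (hX : ∀ i, MemLp (X i) 2 μ)
    (hindep : Pairwise fun i j => X i ⟂ᵢ[μ] X j) {S : Ω → ℝ}
    (hS : ∀ᵐ ω ∂μ, HasSum (fun i => X i ω) (S ω)) {m v : ℝ} (hm : HasSum (fun i => μ[X i]) m)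
    (hv : HasSum (fun i => Var[X i; μ]) v) :
    ∫⁻ ω, ENNReal.ofReal ((S ω - m) ^ 2) ∂μ ≤ ENNReal.ofReal v := by
  have hpartial : ∀ k, AEMeasurable (fun ω => ∑ i ∈ Finset.range k, X i ω) μ := fun k =>
    (Finset.range k).aemeasurable_fun_sum fun i _ => (hX i).aemeasurable
  refine lintegral_le_of_tendsto_ae (F := fun k ω => ENNReal.ofReal
      ((∑ i ∈ Finset.range k, X i ω - ∑ i ∈ Finset.range k, μ[X i]) ^ 2)) (fun k => ?_) ?_
    fun k => ?_
  · exact (((hpartial k).sub_const _).pow_const 2).ennreal_ofReal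
  · filter_upwards [hS] with ω hω
    exact (ENNReal.continuous_ofReal.tendsto _).comp
      ((hω.tendsto_sum_nat.sub hm.tendsto_sum_nat).pow 2)
  · rw [IndepFun.lintegral_sq_sum_sub_eq_ofReal_sum_variance (fun i _ => hX i)
      fun i _ j _ hij => hindep hij]
    exact ENNReal.ofReal_le_ofReal (sum_le_hasSum _ (fun i _ => variance_nonneg _ _) hv)

theorem meas_ge_abs_tsum_sub_le {X : ℕ → Ω → ℝ} (hX : ∀ i, MemLp (X i) 2 μ)
    (hindep : Pairwise fun i j => X i ⟂ᵢ[μ] X j) {S : Ω → ℝ}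
    (hS : ∀ᵐ ω ∂μ, HasSum (fun i => X i ω) (S ω)) {m v : ℝ} (hm : HasSum (fun i => μ[X i]) m)
    (hv : HasSum (fun i => Var[X i; μ]) v) {c : ℝ} (hc : 0 < c) :
    μ {ω | c ≤ |S ω - m|} ≤ ENNReal.ofReal (v / c ^ 2) := by
  have hSmeas : AEMeasurable S μ := aemeasurable_of_tendsto_metrizable_ae'
    (fun k => (Finset.range k).aemeasurable_fun_sum fun i _ => (hX i).aemeasurable)
    (hS.mono fun _ h => h.tendsto_sum_nat)
  calc μ {ω | c ≤ |S ω - m|} ≤ (∫⁻ ω, ENNReal.ofReal ((S ω - m) ^ 2) ∂μ) / ENNReal.ofReal (c ^ 2) :=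
        meas_ge_abs_sub_le_lintegral_sq_div hSmeas m hc
    _ ≤ ENNReal.ofReal v / ENNReal.ofReal (c ^ 2) :=
        ENNReal.div_le_div_right (lintegral_sq_tsum_sub_le hX hindep hS hm hv) _
    _ = ENNReal.ofReal (v / c ^ 2) := (ENNReal.ofReal_div_of_pos (by positivity)).symm

end Series

end ProbabilityTheory

theorem tsum_sq_le_mul_tsum {ι : Type*} {g : ι → ℝ} (hg : ∀ i, 0 ≤ g i) (hsum : Summable g)
    {c : ℝ} (hc : ∀ i, g i ≤ c) : ∑' i, g i ^ 2 ≤ c * ∑' i, g i := by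
  have hle : ∀ i, g i ^ 2 ≤ c * g i := fun i => by
    rw [sq]; exact mul_le_mul_of_nonneg_right (hc i) (hg i)
  rw [← tsum_mul_left]
  exact Summable.tsum_le_tsum hle (.of_nonneg_of_le (fun i => sq_nonneg _) hle (hsum.mul_left c))
    (hsum.mul_left c)

theorem Summable.sq_of_nonneg {f : ℕ → ℝ} (hf : ∀ n, 0 ≤ f n) (hsum : Summable f) :
    Summable fun n => f n ^ 2 := by
  obtain ⟨c, hc⟩ := hsum.tendsto_atTop_zero.bddAbove_range
  refine .of_nonneg_of_le (fun n => sq_nonneg _) (fun n => ?_) (hsum.mul_left c)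
  rw [sq]; exact mul_le_mul_of_nonneg_right (hc ⟨n, rfl⟩) (hf n)

theorem antitone_tsum_nat_add {f : ℕ → ℝ} (hf : ∀ n, 0 ≤ f n) (hsum : Summable f) :
    Antitone fun n => ∑' i, f (n + i) := by
  refine antitone_nat_of_succ_le fun n => ?_
  refine Summable.tsum_le_tsum_of_inj (· + 1) (add_left_injective 1) (fun _ _ => hf _)
    (fun i => le_of_eq (congrArg f (by ring))) ?_ ?_ <;>
  exact hsum.comp_injective (add_right_injective _)

theorem tendsto_tsum_sq_div_sq_of_tendsto_div_tsum {f : ℕ → ℝ} (hf : ∀ n, 0 < f n)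
    (hsum : Summable f) (hsmall : Tendsto (fun n => f n / ∑' i, f (n + 1 + i)) atTop (𝓝 0)) :
    Tendsto (fun n => (∑' i, f (n + 1 + i) ^ 2) / (∑' i, f (n + 1 + i)) ^ 2) atTop (𝓝 0) := by
  set A : ℕ → ℝ := fun n => ∑' i, f (n + 1 + i)
  have htail : ∀ n, Summable fun i => f (n + 1 + i) := fun n =>
    hsum.comp_injective (add_right_injective _)
  have hA_pos : ∀ n, 0 < A n := fun n => (htail n).tsum_pos (fun _ => (hf _).le) 0 (hf _)
  have hA_anti : Antitone A := fun m n hmn =>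
    antitone_tsum_nat_add (fun i => (hf i).le) hsum (Nat.succ_le_succ hmn)
  refine tendsto_order.2 ⟨fun a ha => Eventually.of_forall fun n => ha.trans_le (by positivity),
    fun δ hδ => ?_⟩
  obtain ⟨N, hN⟩ := eventually_atTop.1 (hsmall.eventually (gt_mem_nhds (half_pos hδ)))
  refine eventually_atTop.2 ⟨N, fun n hn => ?_⟩
  have hle : ∀ i, f (n + 1 + i) ≤ δ / 2 * A n := fun i => calc
    f (n + 1 + i) ≤ δ / 2 * A (n + 1 + i) := ((div_lt_iff₀ (hA_pos _)).1 (hN _ (by omega))).le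
    _ ≤ δ / 2 * A n := mul_le_mul_of_nonneg_left (hA_anti (by omega)) (by positivity)
  have hAn := hA_pos n
  calc (∑' i, f (n + 1 + i) ^ 2) / A n ^ 2 ≤ δ / 2 * A n * A n / A n ^ 2 :=
        div_le_div_of_nonneg_right (tsum_sq_le_mul_tsum (fun _ => (hf _).le) (htail n) hle)
          (by positivity)
    _ = δ / 2 := by field_simp
    _ < δ := half_lt_self hδ

theorem hitting_time_wlln_general {Ω : Type*} [MeasurableSpace Ω]
    (P : Measure Ω) [IsProbabilityMeasure P]
    (lam : ℕ → ℝ) (hpos : ∀ n, 0 < lam n)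
    (hsum : Summable fun n => (lam n)⁻¹)
    (X : ℕ → Ω → ℝ) (hmeas : ∀ i, Measurable (X i))
    (hindep : iIndepFun X P)
    (hexp : ∀ i, Measure.map (X i) P = expMeasure (lam i))
    (T : ℕ → Ω → ℝ)
    (hT : ∀ᵐ ω ∂P, ∀ n, HasSum (fun i => X (n + 1 + i) ω) (T n ω))
    (A : ℕ → ℝ) (hA : ∀ n, A n = ∑' i : ℕ, (lam (n + 1 + i))⁻¹)
    (hsmall : Tendsto (fun n => (lam n)⁻¹ / A n) atTop (𝓝 0)) :
    ∀ ε > 0, Tendsto (fun n => P {ω | ε ≤ |T n ω / A n - 1|}) atTop (𝓝 0) := by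
  intro ε hε
  have hlaw : ∀ i, HasLaw (X i) (expMeasure (lam i)) P := fun i => ⟨(hmeas i).aemeasurable, hexp i⟩
  have hinv : ∀ n, 0 < (lam n)⁻¹ := fun n => inv_pos.2 (hpos n)
  have htail : ∀ n, Summable fun i => (lam (n + 1 + i))⁻¹ := fun n =>
    hsum.comp_injective (add_right_injective _)
  have hbound : ∀ n, P {ω | ε ≤ |T n ω / A n - 1|}
      ≤ ENNReal.ofReal ((∑' i, (lam (n + 1 + i))⁻¹ ^ 2) / A n ^ 2 / ε ^ 2) := by
    intro n
    have hAn : 0 < A n := hA n ▸ (htail n).tsum_pos (fun _ => (hinv _).le) 0 (hinv _)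
    have hset : {ω | ε ≤ |T n ω / A n - 1|} = {ω | ε * A n ≤ |T n ω - A n|} := by
      ext ω
      change ε ≤ _ ↔ ε * A n ≤ _
      rw [div_sub_one hAn.ne', abs_div, abs_of_pos hAn, le_div_iff₀ hAn]
    rw [hset, div_div, ← mul_pow, mul_comm (A n)]
    refine meas_ge_abs_tsum_sub_le (X := fun i => X (n + 1 + i))
      (fun i => (hlaw _).memLp_iff.2 (memLp_id_expMeasure (hpos _)))
      (fun i j hij => hindep.indepFun (by omega)) (hT.mono fun ω h => h n) ?_ ?_ (mul_pos hε hAn)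
    · simp_rw [(hlaw _).integral_eq, integral_id_expMeasure (hpos _), hA n]
      exact (htail n).hasSum
    · simp_rw [(hlaw _).variance_eq, variance_id_expMeasure (hpos _)]
      exact ((hsum.sq_of_nonneg fun n => (hinv n).le).comp_injective (add_right_injective _)).hasSum
  refine tendsto_of_tendsto_of_tendsto_of_le_of_le tendsto_const_nhds ?_ (fun _ => zero_le) hbound
  simp_rw [funext hA] at hsmall ⊢
  simpa using ENNReal.tendsto_ofReal
    ((tendsto_tsum_sq_div_sq_of_tendsto_div_tsum hinv hsum hsmall).div_const (ε ^ 2))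

theorem hitting_time_wlln {Ω : Type*} [MeasurableSpace Ω]
    (P : Measure Ω) [IsProbabilityMeasure P]
    (lam : ℕ → ℝ) (hpos : ∀ n, 0 < lam n)
    (hsum : Summable fun n => (lam n)⁻¹)
    (X : ℕ → Ω → ℝ) (hmeas : ∀ i, Measurable (X i))
    (hindep : iIndepFun X P)
    (hexp : ∀ i, Measure.map (X i) P = expMeasure (lam i))
    (T : ℕ → Ω → ℝ) (hTmeas : ∀ n, Measurable (T n))
    (hT : ∀ᵐ ω ∂P, ∀ n, HasSum (fun i => X (n + 1 + i) ω) (T n ω))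
    (A : ℕ → ℝ) (hA : ∀ n, A n = ∑' i : ℕ, (lam (n + 1 + i))⁻¹)
    (hsmall : Tendsto (fun n => (lam n)⁻¹ / A n) atTop (𝓝 0)) :
    ∀ ε > 0, Tendsto (fun n => P {ω | ε ≤ |T n ω / A n - 1|}) atTop (𝓝 0) :=
  hitting_time_wlln_general P lam hpos hsum X hmeas hindep hexp T hT A hA hsmall
end
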